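/- With the Hessian-connection setup on Θ ⊆ ℝ^d: for every α ∈ ℝ, all θ ∈ Θ and all indices i, j, k, ℓ, the curvature tensor of the α-connection satisfies R^ℓ_{ijk}(θ) = ((1−α²)/4) Σ_{r,m,s} (G(θ)^{−1})_{rm} (G(θ)^{−1})_{sℓ} ( F_{ikm}(θ) F_{jrs}(θ) − F_{jkm}(θ) F_{irs}(θ) ), where F_{abc} = ∂_a∂_b∂_c F. In particular, the α-connection with Christoffel symbols Γ^k_{ij} = ((1−α)/2) Σ_m (G^{−1})_{km} F_{ijm} is flat for α = ±1. -/

import Mathlib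

open scoped BigOperators ContDiff

/-- Partial derivative in the `i`-th coordinate direction. -/
noncomputable def pderiv' (d : ℕ) (i : Fin d) (f : (Fin d → ℝ) → ℝ) (θ : Fin d → ℝ) : ℝ :=
  fderiv ℝ f θ (Pi.single i 1)

/-- The Hessian matrix `G(θ) = (∂_i∂_j F(θ))`. -/
noncomputable def hessMat (d : ℕ) (F : (Fin d → ℝ) → ℝ) (θ : Fin d → ℝ) :
    Matrix (Fin d) (Fin d) ℝ :=
  Matrix.of fun i j => pderiv' d i (fun θ' => pderiv' d j F θ') θ

/-- Third partial derivatives `F_{ijm} = ∂_i∂_j∂_m F`. -/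
noncomputable def thirdDeriv (d : ℕ) (F : (Fin d → ℝ) → ℝ) (i j m : Fin d)
    (θ : Fin d → ℝ) : ℝ :=
  pderiv' d i (fun θ' => pderiv' d j (fun θ'' => pderiv' d m F θ'') θ') θ

/-- Christoffel symbols of the second kind of the α-connection in the Hessian setup:
`Γ^k_{ij}(θ) = ((1−α)/2) Σ_m (G(θ)⁻¹)_{km} ∂_i∂_j∂_m F(θ)`. -/
noncomputable def hessChristoffel (d : ℕ) (α : ℝ) (F : (Fin d → ℝ) → ℝ) (k i j : Fin d)
    (θ : Fin d → ℝ) : ℝ :=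
  ((1 - α) / 2) * ∑ m, (hessMat d F θ)⁻¹ k m * thirdDeriv d F i j m θ

/-- Curvature tensor of the α-connection:
`R^ℓ_{ijk} = ∂_iΓ^ℓ_{jk} − ∂_jΓ^ℓ_{ik} + Σ_m (Γ^ℓ_{im}Γ^m_{jk} − Γ^ℓ_{jm}Γ^m_{ik})`. -/
noncomputable def hessCurv (d : ℕ) (α : ℝ) (F : (Fin d → ℝ) → ℝ) (l i j k : Fin d)
    (θ : Fin d → ℝ) : ℝ :=
  pderiv' d i (hessChristoffel d α F l j k) θ - pderiv' d j (hessChristoffel d α F l i k) θ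
    + ∑ m, (hessChristoffel d α F l i m θ * hessChristoffel d α F m j k θ
        - hessChristoffel d α F l j m θ * hessChristoffel d α F m i k θ)


section Aux
variable {d : ℕ} {Θ : Set (Fin d → ℝ)}

lemma pd_contDiffOn (hΘ : IsOpen Θ) {f : (Fin d → ℝ) → ℝ}
    (hf : ContDiffOn ℝ ∞ f Θ) (i : Fin d) :
    ContDiffOn ℝ ∞ (pderiv' d i f) Θ := by
  have h1 : ContDiffOn ℝ ∞ (fderiv ℝ f) Θ :=
    hf.fderiv_of_isOpen hΘ (le_of_eq rfl)
  have h2 := (ContinuousLinearMap.apply ℝ ℝ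
      (Pi.single (M := fun _ : Fin d => ℝ) i 1)).contDiff (n := (∞ : WithTop ℕ∞))
  have := h2.comp_contDiffOn h1
  exact this

lemma cdo_diffAt (hΘ : IsOpen Θ) {E' : Type*} [NormedAddCommGroup E'] [NormedSpace ℝ E']
    {f : (Fin d → ℝ) → E'} (hf : ContDiffOn ℝ ∞ f Θ) {θ} (hθ : θ ∈ Θ) :
    DifferentiableAt ℝ f θ :=
  ((hf θ hθ).contDiffAt (hΘ.mem_nhds hθ)).differentiableAt (by norm_num)

lemma pd_congr (hΘ : IsOpen Θ) {f g : (Fin d → ℝ) → ℝ} (h : ∀ x ∈ Θ, f x = g x)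
    {θ} (hθ : θ ∈ Θ) (i : Fin d) : pderiv' d i f θ = pderiv' d i g θ := by
  unfold pderiv'
  rw [Filter.EventuallyEq.fderiv_eq (Filter.eventuallyEq_of_mem (hΘ.mem_nhds hθ) h)]

lemma pd_const_mul {f : (Fin d → ℝ) → ℝ} {θ} (hf : DifferentiableAt ℝ f θ) (c : ℝ) (i : Fin d) :
    pderiv' d i (fun x => c * f x) θ = c * pderiv' d i f θ := by
  unfold pderiv'; rw [fderiv_const_mul hf c]; simp

lemma pd_sum {f : Fin d → (Fin d → ℝ) → ℝ} {θ} (hf : ∀ m, DifferentiableAt ℝ (f m) θ) (i : Fin d) :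
    pderiv' d i (fun x => ∑ m, f m x) θ = ∑ m, pderiv' d i (f m) θ := by
  unfold pderiv'; rw [fderiv_fun_sum fun m _ => hf m]; simp

lemma pd_mul {f g : (Fin d → ℝ) → ℝ} {θ} (hf : DifferentiableAt ℝ f θ)
    (hg : DifferentiableAt ℝ g θ) (i : Fin d) :
    pderiv' d i (fun x => f x * g x) θ
      = f θ * pderiv' d i g θ + g θ * pderiv' d i f θ := by
  unfold pderiv'; rw [fderiv_fun_mul hf hg]; simp

lemma pd_comm (hΘ : IsOpen Θ) {f : (Fin d → ℝ) → ℝ} (hf : ContDiffOn ℝ ∞ f Θ)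
    {θ} (hθ : θ ∈ Θ) (i j : Fin d) :
    pderiv' d i (pderiv' d j f) θ = pderiv' d j (pderiv' d i f) θ := by
  have hder : ContDiffOn ℝ ∞ (fderiv ℝ f) Θ := hf.fderiv_of_isOpen hΘ (le_of_eq rfl)
  have hdiff : DifferentiableAt ℝ (fderiv ℝ f) θ := cdo_diffAt hΘ hder hθ
  have key : ∀ v w : Fin d → ℝ,
      fderiv ℝ (fun y => fderiv ℝ f y v) θ w = fderiv ℝ (fderiv ℝ f) θ w v := by
    intro v w
    rw [fderiv_clm_apply hdiff (differentiableAt_const v)]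
    simp
  have symm : ∀ v w, fderiv ℝ (fderiv ℝ f) θ v w = fderiv ℝ (fderiv ℝ f) θ w v := by
    intro v w
    refine second_derivative_symmetric_of_eventually (f := f) ?_ hdiff.hasFDerivAt v w
    filter_upwards [hΘ.mem_nhds hθ] with y hy
    exact (cdo_diffAt hΘ hf hy).hasFDerivAt
  show fderiv ℝ (fun y => fderiv ℝ f y (Pi.single j 1)) θ (Pi.single i 1) = _
  rw [key, symm, ← key]
  rfl

lemma det_smooth (hΘ : IsOpen Θ) {M : (Fin d → ℝ) → Matrix (Fin d) (Fin d) ℝ}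
    (hM : ∀ a b, ContDiffOn ℝ ∞ (fun θ => M θ a b) Θ) :
    ContDiffOn ℝ ∞ (fun θ => (M θ).det) Θ := by
  simp_rw [Matrix.det_apply']
  refine ContDiffOn.sum fun σ _ => ContDiffOn.mul contDiffOn_const ?_
  intro x hx
  exact contDiffWithinAt_prod fun i _ => hM (σ i) i x hx

lemma adj_smooth (hΘ : IsOpen Θ) {M : (Fin d → ℝ) → Matrix (Fin d) (Fin d) ℝ}
    (hM : ∀ a b, ContDiffOn ℝ ∞ (fun θ => M θ a b) Θ) (a b : Fin d) :
    ContDiffOn ℝ ∞ (fun θ => (M θ).adjugate a b) Θ := by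
  simp_rw [Matrix.adjugate_apply]
  refine det_smooth hΘ fun x y => ?_
  rcases eq_or_ne x b with rfl | hxb
  · simpa [Matrix.updateRow_self] using contDiffOn_const
  · simpa [Matrix.updateRow_ne hxb] using hM x y

lemma inv_entry_smooth (hΘ : IsOpen Θ) {M : (Fin d → ℝ) → Matrix (Fin d) (Fin d) ℝ}
    (hM : ∀ a b, ContDiffOn ℝ ∞ (fun θ => M θ a b) Θ)
    (hdet : ∀ θ ∈ Θ, (M θ).det ≠ 0) (a b : Fin d) :
    ContDiffOn ℝ ∞ (fun θ => (M θ)⁻¹ a b) Θ := by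
  have : ∀ θ, (M θ)⁻¹ a b = ((M θ).det)⁻¹ * (M θ).adjugate a b := by
    intro θ
    rw [Matrix.inv_def]
    simp [Ring.inverse_eq_inv', smul_eq_mul]
  simp_rw [this]
  exact ((det_smooth hΘ hM).inv hdet).mul (adj_smooth hΘ hM a b)

end Aux

section Hess
variable {d : ℕ} {Θ : Set (Fin d → ℝ)} {F : (Fin d → ℝ) → ℝ}

lemma hG_smooth (hΘ : IsOpen Θ) (hFi : ContDiffOn ℝ ∞ F Θ) (a b : Fin d) :
    ContDiffOn ℝ ∞ (fun θ => hessMat d F θ a b) Θ :=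
  pd_contDiffOn hΘ (pd_contDiffOn hΘ hFi b) a

lemma hT_smooth (hΘ : IsOpen Θ) (hFi : ContDiffOn ℝ ∞ F Θ) (a b c : Fin d) :
    ContDiffOn ℝ ∞ (thirdDeriv d F a b c) Θ :=
  pd_contDiffOn hΘ (pd_contDiffOn hΘ (pd_contDiffOn hΘ hFi c) b) a

lemma hH_smooth (hΘ : IsOpen Θ) (hFi : ContDiffOn ℝ ∞ F Θ)
    (hinv : ∀ θ ∈ Θ, IsUnit (hessMat d F θ).det) (a b : Fin d) :
    ContDiffOn ℝ ∞ (fun θ => (hessMat d F θ)⁻¹ a b) Θ :=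
  inv_entry_smooth hΘ (hG_smooth hΘ hFi) (fun θ hθ => (hinv θ hθ).ne_zero) a b

lemma pd_inv_entry (hΘ : IsOpen Θ) (hFi : ContDiffOn ℝ ∞ F Θ)
    (hinv : ∀ θ ∈ Θ, IsUnit (hessMat d F θ).det) {θ} (hθ : θ ∈ Θ) (i a b : Fin d) :
    pderiv' d i (fun θ' => (hessMat d F θ')⁻¹ a b) θ
      = -∑ r, ∑ s, (hessMat d F θ)⁻¹ a r * thirdDeriv d F i r s θ * (hessMat d F θ)⁻¹ s b := by
  have hHd : ∀ a b : Fin d, DifferentiableAt ℝ (fun θ' => (hessMat d F θ')⁻¹ a b) θ :=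
    fun a b => cdo_diffAt hΘ (hH_smooth hΘ hFi hinv a b) hθ
  have hGd : ∀ a b : Fin d, DifferentiableAt ℝ (fun θ' => hessMat d F θ' a b) θ :=
    fun a b => cdo_diffAt hΘ (hG_smooth hΘ hFi a b) hθ
  have key : ∀ b' : Fin d,
      (∑ s, pderiv' d i (fun θ' => (hessMat d F θ')⁻¹ a s) θ * hessMat d F θ s b')
        = -∑ s, (hessMat d F θ)⁻¹ a s * thirdDeriv d F i s b' θ := by
    intro b'
    have h0 : pderiv' d i (fun θ' => ∑ s, (hessMat d F θ')⁻¹ a s * hessMat d F θ' s b') θ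
        = 0 := by
      have hcongr : pderiv' d i (fun θ' => ∑ s, (hessMat d F θ')⁻¹ a s * hessMat d F θ' s b') θ
          = pderiv' d i (fun _ => (1 : Matrix (Fin d) (Fin d) ℝ) a b') θ := by
        refine pd_congr hΘ (fun x hx => ?_) hθ i
        rw [← Matrix.mul_apply, Matrix.nonsing_inv_mul _ (hinv x hx)]
      rw [hcongr]
      unfold pderiv'
      rw [fderiv_fun_const]
      simp
    have hexp : pderiv' d i (fun θ' => ∑ s, (hessMat d F θ')⁻¹ a s * hessMat d F θ' s b') θ
        = ∑ s, pderiv' d i (fun θ' => (hessMat d F θ')⁻¹ a s * hessMat d F θ' s b') θ :=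
      pd_sum (fun s => (hHd a s).mul (hGd s b')) i
    have hterm : ∀ s : Fin d,
        pderiv' d i (fun θ' => (hessMat d F θ')⁻¹ a s * hessMat d F θ' s b') θ
          = (hessMat d F θ)⁻¹ a s * thirdDeriv d F i s b' θ
            + hessMat d F θ s b' * pderiv' d i (fun θ' => (hessMat d F θ')⁻¹ a s) θ := by
      intro s
      rw [pd_mul (hHd a s) (hGd s b') i]
      rfl
    rw [hexp] at h0
    simp_rw [hterm] at h0
    rw [Finset.sum_add_distrib] at h0
    have flip : (∑ s, pderiv' d i (fun θ' => (hessMat d F θ')⁻¹ a s) θ * hessMat d F θ s b')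
        = ∑ s, hessMat d F θ s b' * pderiv' d i (fun θ' => (hessMat d F θ')⁻¹ a s) θ :=
      Finset.sum_congr rfl fun s _ => mul_comm _ _
    rw [flip]
    linarith [h0]
  have unit2 : hessMat d F θ * (hessMat d F θ)⁻¹ = 1 :=
    Matrix.mul_nonsing_inv _ (hinv θ hθ)
  have d2 : ∀ s : Fin d, (1 : Matrix (Fin d) (Fin d) ℝ) s b
      = ∑ r, hessMat d F θ s r * (hessMat d F θ)⁻¹ r b := by
    intro s; rw [← Matrix.mul_apply, unit2]
  calc pderiv' d i (fun θ' => (hessMat d F θ')⁻¹ a b) θ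
      = ∑ s, pderiv' d i (fun θ' => (hessMat d F θ')⁻¹ a s) θ
          * (1 : Matrix (Fin d) (Fin d) ℝ) s b := by
        simp [Matrix.one_apply, mul_ite, mul_one, mul_zero, Finset.sum_ite_eq']
    _ = ∑ s, pderiv' d i (fun θ' => (hessMat d F θ')⁻¹ a s) θ
          * ∑ r, hessMat d F θ s r * (hessMat d F θ)⁻¹ r b :=
        Finset.sum_congr rfl fun s _ => by rw [d2 s]
    _ = ∑ s, ∑ r, pderiv' d i (fun θ' => (hessMat d F θ')⁻¹ a s) θ
          * hessMat d F θ s r * (hessMat d F θ)⁻¹ r b := by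
        refine Finset.sum_congr rfl fun s _ => ?_
        rw [Finset.mul_sum]
        exact Finset.sum_congr rfl fun r _ => by ring
    _ = ∑ r, ∑ s, pderiv' d i (fun θ' => (hessMat d F θ')⁻¹ a s) θ
          * hessMat d F θ s r * (hessMat d F θ)⁻¹ r b := Finset.sum_comm
    _ = ∑ r, (∑ s, pderiv' d i (fun θ' => (hessMat d F θ')⁻¹ a s) θ
          * hessMat d F θ s r) * (hessMat d F θ)⁻¹ r b :=
        Finset.sum_congr rfl fun r _ => by rw [Finset.sum_mul]
    _ = ∑ r, (-∑ s, (hessMat d F θ)⁻¹ a s * thirdDeriv d F i s r θ)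
          * (hessMat d F θ)⁻¹ r b :=
        Finset.sum_congr rfl fun r _ => by rw [key r]
    _ = -∑ r, ∑ s, (hessMat d F θ)⁻¹ a s * thirdDeriv d F i s r θ
          * (hessMat d F θ)⁻¹ r b := by
        rw [← Finset.sum_neg_distrib]
        refine Finset.sum_congr rfl fun r _ => ?_
        rw [neg_mul, Finset.sum_mul, ← Finset.sum_neg_distrib]
    _ = -∑ r, ∑ s, (hessMat d F θ)⁻¹ a r * thirdDeriv d F i r s θ
          * (hessMat d F θ)⁻¹ s b := by
        rw [neg_inj]
        exact Finset.sum_comm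

lemma pd_christoffel (hΘ : IsOpen Θ) (hFi : ContDiffOn ℝ ∞ F Θ)
    (hinv : ∀ θ ∈ Θ, IsUnit (hessMat d F θ).det) {θ} (hθ : θ ∈ Θ) (α : ℝ) (i l j k : Fin d) :
    pderiv' d i (hessChristoffel d α F l j k) θ
      = ((1 - α) / 2) * ∑ m,
          ((-∑ r, ∑ s, (hessMat d F θ)⁻¹ l r * thirdDeriv d F i r s θ * (hessMat d F θ)⁻¹ s m)
              * thirdDeriv d F j k m θ
            + (hessMat d F θ)⁻¹ l m * pderiv' d i (thirdDeriv d F j k m) θ) := by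
  have hHd : ∀ a b : Fin d, DifferentiableAt ℝ (fun θ' => (hessMat d F θ')⁻¹ a b) θ :=
    fun a b => cdo_diffAt hΘ (hH_smooth hΘ hFi hinv a b) hθ
  have hTd : ∀ a b c : Fin d, DifferentiableAt ℝ (thirdDeriv d F a b c) θ :=
    fun a b c => cdo_diffAt hΘ (hT_smooth hΘ hFi a b c) hθ
  have hsum : DifferentiableAt ℝ
      (fun x => ∑ m, (hessMat d F x)⁻¹ l m * thirdDeriv d F j k m x) θ :=
    DifferentiableAt.fun_sum fun m _ => (hHd l m).mul (hTd j k m)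
  have step1 : pderiv' d i (hessChristoffel d α F l j k) θ
      = ((1 - α) / 2) * pderiv' d i
          (fun x => ∑ m, (hessMat d F x)⁻¹ l m * thirdDeriv d F j k m x) θ :=
    pd_const_mul hsum ((1 - α) / 2) i
  have step2 : pderiv' d i (fun x => ∑ m, (hessMat d F x)⁻¹ l m * thirdDeriv d F j k m x) θ
      = ∑ m, pderiv' d i (fun x => (hessMat d F x)⁻¹ l m * thirdDeriv d F j k m x) θ :=
    pd_sum (fun m => (hHd l m).mul (hTd j k m)) i
  rw [step1, step2]
  congr 1
  refine Finset.sum_congr rfl fun m _ => ?_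
  have step3 : pderiv' d i (fun x => (hessMat d F x)⁻¹ l m * thirdDeriv d F j k m x) θ
      = (hessMat d F θ)⁻¹ l m * pderiv' d i (thirdDeriv d F j k m) θ
        + thirdDeriv d F j k m θ * pderiv' d i (fun θ' => (hessMat d F θ')⁻¹ l m) θ :=
    pd_mul (hHd l m) (hTd j k m) i
  rw [step3, pd_inv_entry hΘ hFi hinv hθ i l m]
  ring

end Hess

section Alg

variable {d : ℕ}

private lemma p12 (f : Fin d → Fin d → Fin d → ℝ) :
    (∑ x, ∑ y, ∑ z, f x y z) = ∑ x, ∑ y, ∑ z, f y x z := Finset.sum_comm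

private lemma p23 (f : Fin d → Fin d → Fin d → ℝ) :
    (∑ x, ∑ y, ∑ z, f x y z) = ∑ x, ∑ y, ∑ z, f x z y :=
  Finset.sum_congr rfl fun _ _ => Finset.sum_comm

private lemma p13 (f : Fin d → Fin d → Fin d → ℝ) :
    (∑ x, ∑ y, ∑ z, f x y z) = ∑ x, ∑ y, ∑ z, f z y x :=
  calc (∑ x, ∑ y, ∑ z, f x y z) = ∑ x, ∑ y, ∑ z, f y x z := p12 f
    _ = ∑ x, ∑ y, ∑ z, f z x y := p23 fun x y z => f y x z
    _ = ∑ x, ∑ y, ∑ z, f z y x := p12 fun x y z => f z x y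

private lemma pcyc2 (f : Fin d → Fin d → Fin d → ℝ) :
    (∑ x, ∑ y, ∑ z, f x y z) = ∑ x, ∑ y, ∑ z, f z x y :=
  calc (∑ x, ∑ y, ∑ z, f x y z) = ∑ x, ∑ y, ∑ z, f y x z := p12 f
    _ = ∑ x, ∑ y, ∑ z, f z x y := p23 fun x y z => f y x z

lemma alg_main (c : ℝ) (H : Matrix (Fin d) (Fin d) ℝ) (T : Fin d → Fin d → Fin d → ℝ)
    (Q : Fin d → Fin d → Fin d → Fin d → ℝ)
    (hH : ∀ a b, H a b = H b a) (hT : ∀ a b e, T a b e = T a e b)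
    (hQ : ∀ a b k m, Q a b k m = Q b a k m) (l i j k : Fin d) :
    (c * ∑ m, ((-∑ r, ∑ s, H l r * T i r s * H s m) * T j k m + H l m * Q i j k m))
    - (c * ∑ m, ((-∑ r, ∑ s, H l r * T j r s * H s m) * T i k m + H l m * Q j i k m))
    + ∑ m, ((c * ∑ s, H l s * T i m s) * (c * ∑ s, H m s * T j k s)
          - (c * ∑ s, H l s * T j m s) * (c * ∑ s, H m s * T i k s))
    = (c - c * c) * ∑ r, ∑ m, ∑ s,
        H r m * H s l * (T i k m * T j r s - T j k m * T i r s) := by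
  have e1 : ∀ i' j', (∑ m, ((-∑ r, ∑ s, H l r * T i' r s * H s m) * T j' k m
      + H l m * Q i' j' k m))
      = -(∑ m, ∑ r, ∑ s, H l r * T i' r s * H s m * T j' k m)
        + ∑ m, H l m * Q i' j' k m := by
    intro i' j'
    rw [Finset.sum_add_distrib]
    congr 1
    rw [← Finset.sum_neg_distrib]
    refine Finset.sum_congr rfl fun m _ => ?_
    rw [neg_mul, neg_inj, Finset.sum_mul]
    refine Finset.sum_congr rfl fun r _ => ?_
    rw [Finset.sum_mul]
  have e2 : ∀ i' j', (∑ m, (c * ∑ s, H l s * T i' m s) * (c * ∑ s, H m s * T j' k s))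
      = c * c * ∑ m, ∑ r, ∑ s, H l r * T i' r s * H s m * T j' k m := by
    intro i' j'
    have expand : ∀ m : Fin d, (c * ∑ s, H l s * T i' m s) * (c * ∑ s, H m s * T j' k s)
        = c * c * ∑ s, ∑ r, H l s * T i' m s * H m r * T j' k r := by
      intro m
      rw [mul_mul_mul_comm, Finset.sum_mul_sum]
      congr 1
      refine Finset.sum_congr rfl fun s _ => Finset.sum_congr rfl fun r _ => by ring
    simp_rw [expand]
    rw [← Finset.mul_sum]
    congr 1
    have hstep : (∑ m, ∑ s, ∑ r, H l s * T i' m s * H m r * T j' k r)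
        = ∑ m, ∑ s, ∑ r, H l s * T i' s m * H m r * T j' k r := by
      refine Finset.sum_congr rfl fun m _ => Finset.sum_congr rfl fun s _ =>
        Finset.sum_congr rfl fun r _ => ?_
      rw [hT i' m s]
    rw [hstep]
    exact p13 fun x y z => H l y * T i' y x * H x z * T j' k z
  have e3 : ∀ i' j', (∑ r, ∑ m, ∑ s, H r m * H s l * (T i' k m * T j' r s))
      = ∑ m, ∑ r, ∑ s, H l r * T j' r s * H s m * T i' k m := by
    intro i' j'
    have step : (∑ r, ∑ m, ∑ s, H r m * H s l * (T i' k m * T j' r s))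
        = ∑ r, ∑ m, ∑ s, H l s * T j' s r * H r m * T i' k m := by
      refine Finset.sum_congr rfl fun r _ => Finset.sum_congr rfl fun m _ =>
        Finset.sum_congr rfl fun s _ => ?_
      rw [hH s l, hT j' r s]; ring
    rw [step]
    exact pcyc2 fun x y z => H l z * T j' z x * H x y * T i' k y
  have hQt : (∑ m, H l m * Q j i k m) = ∑ m, H l m * Q i j k m :=
    Finset.sum_congr rfl fun m _ => by rw [hQ j i]
  have eR : (∑ r, ∑ m, ∑ s, H r m * H s l * (T i k m * T j r s - T j k m * T i r s))
      = (∑ m, ∑ r, ∑ s, H l r * T j r s * H s m * T i k m)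
        - ∑ m, ∑ r, ∑ s, H l r * T i r s * H s m * T j k m := by
    have split : ∀ r m s : Fin d,
        H r m * H s l * (T i k m * T j r s - T j k m * T i r s)
          = H r m * H s l * (T i k m * T j r s) - H r m * H s l * (T j k m * T i r s) :=
      fun r m s => mul_sub _ _ _
    simp_rw [split, Finset.sum_sub_distrib]
    rw [e3 i j, e3 j i]
  rw [e1 i j, e1 j i, hQt, Finset.sum_sub_distrib, e2 i j, e2 j i, eR]
  ring

end Alg

/-- In the Hessian-connection setup (`F` smooth on open `Θ` with everywhere
invertible Hessian), the curvature tensor of the α-connection is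
`R^ℓ_{ijk} = ((1−α²)/4) Σ_{r,m,s} (G⁻¹)_{rm}(G⁻¹)_{sℓ}(F_{ikm}F_{jrs} − F_{jkm}F_{irs})`;
in particular the α-connection is flat for `α = ±1`. -/
theorem stmt12 (d : ℕ) (Θ : Set (Fin d → ℝ)) (hΘ : IsOpen Θ)
    (F : (Fin d → ℝ) → ℝ) (hF : ContDiffOn ℝ (⊤ : ℕ∞) F Θ)
    (hinv : ∀ θ ∈ Θ, IsUnit (hessMat d F θ).det) (α : ℝ) :
    (∀ θ ∈ Θ, ∀ l i j k : Fin d,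
      hessCurv d α F l i j k θ
        = ((1 - α ^ 2) / 4) * ∑ r, ∑ m, ∑ s,
            (hessMat d F θ)⁻¹ r m * (hessMat d F θ)⁻¹ s l
              * (thirdDeriv d F i k m θ * thirdDeriv d F j r s θ
                - thirdDeriv d F j k m θ * thirdDeriv d F i r s θ)) ∧
    ((α = 1 ∨ α = -1) → ∀ θ ∈ Θ, ∀ l i j k : Fin d, hessCurv d α F l i j k θ = 0) := by
  have hFi : ContDiffOn ℝ ∞ F Θ := hF.of_le (by simp)
  have main : ∀ θ ∈ Θ, ∀ l i j k : Fin d,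
      hessCurv d α F l i j k θ
        = ((1 - α ^ 2) / 4) * ∑ r, ∑ m, ∑ s,
            (hessMat d F θ)⁻¹ r m * (hessMat d F θ)⁻¹ s l
              * (thirdDeriv d F i k m θ * thirdDeriv d F j r s θ
                - thirdDeriv d F j k m θ * thirdDeriv d F i r s θ) := by
    intro θ hθ l i j k
    have hGsymm : (hessMat d F θ).transpose = hessMat d F θ := by
      ext a b
      exact pd_comm hΘ hFi hθ b a
    have hH : ∀ a b : Fin d, (hessMat d F θ)⁻¹ a b = (hessMat d F θ)⁻¹ b a := by
      intro a b
      calc (hessMat d F θ)⁻¹ a b = ((hessMat d F θ)⁻¹).transpose b a := rfl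
        _ = ((hessMat d F θ).transpose)⁻¹ b a := by rw [Matrix.transpose_nonsing_inv]
        _ = (hessMat d F θ)⁻¹ b a := by rw [hGsymm]
    have hT : ∀ a b e : Fin d, thirdDeriv d F a b e θ = thirdDeriv d F a e b θ := by
      intro a b e
      exact pd_congr hΘ (fun x hx => pd_comm hΘ hFi hx b e) hθ a
    have hQ : ∀ a b k' m' : Fin d,
        pderiv' d a (thirdDeriv d F b k' m') θ = pderiv' d b (thirdDeriv d F a k' m') θ :=
      fun a b k' m' =>
        pd_comm hΘ (pd_contDiffOn hΘ (pd_contDiffOn hΘ hFi m') k') hθ a b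
    have algr := alg_main ((1 - α) / 2) (hessMat d F θ)⁻¹
      (fun a b e => thirdDeriv d F a b e θ)
      (fun a b k' m' => pderiv' d a (thirdDeriv d F b k' m') θ) hH hT hQ l i j k
    have hc : (1 - α ^ 2) / 4 = (1 - α) / 2 - ((1 - α) / 2) * ((1 - α) / 2) := by ring
    unfold hessCurv
    rw [pd_christoffel hΘ hFi hinv hθ α i l j k, pd_christoffel hΘ hFi hinv hθ α j l i k,
      hc]
    simp only [hessChristoffel]
    exact algr
  refine ⟨main, fun hα θ hθ l i j k => ?_⟩
  rw [main θ hθ l i j k]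
  rcases hα with rfl | rfl <;> norm_num
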